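/- Under hypothesis (H1), if k ∈ -core 0⁺A then φ_{A,k} is finite-valued on all of Y, {y : φ_{A,k}(y) < t} = tk + core A for all t ∈ ℝ, and φ_{A,k}(y⁰) - φ_{A,k}(y¹) ≤ φ_{0⁺A,k}(y⁰ - y¹) for all y⁰, y¹ ∈ Y. -/

import Mathlib

open Set Pointwise

noncomputable def phiF {Y : Type*} [AddCommGroup Y] [Module ℝ Y] (A : Set Y) (k : Y) (y : Y) : EReal :=
  sInf ((fun t : ℝ => (t : EReal)) '' {t : ℝ | y - t • k ∈ A})

def recCone {Y : Type*} [AddCommGroup Y] [Module ℝ Y] (A : Set Y) : Set Y :=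
  {u | ∀ a ∈ A, ∀ t : ℝ, 0 ≤ t → a + t • u ∈ A}

def algInterior {Y : Type*} [AddCommGroup Y] [Module ℝ Y] (C : Set Y) : Set Y :=
  {x ∈ C | ∀ y : Y, ∃ ε : ℝ, 0 < ε ∧ ∀ t : ℝ, 0 ≤ t → t ≤ ε → x + t • y ∈ C}

/-!
Since `-k` lies in the core of `0⁺A`, for every direction `d` some `-k + ε • d` is a recession
direction of `A`; scaling by `1 / ε`, every point of `A` can be moved by `d` at the cost of a
shift `-(1 / ε) • k`. This makes every line `y + ℝ k` meet `A` (so `φ < ⊤`), and forces it to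
leave `A` in the direction `+k` unless `A = Y` (so `φ > ⊥`). The same rescaling, now using the
slack `t - s` between a feasible level `s` and `t`, puts `y - t • k` in the core of `A`. The
estimate by `φ_{0⁺A,k}` holds because a recession direction `y₀ - y₁ - s • k` carries feasible
levels `r` of `y₁` to feasible levels `r + s` of `y₀`.
-/

section

variable {Y : Type*} [AddCommGroup Y] [Module ℝ Y] {A : Set Y} {k y : Y}

theorem phiF_le_coe {t : ℝ} (h : y - t • k ∈ A) : phiF A k y ≤ t :=
  sInf_le ⟨t, h, rfl⟩

theorem coe_le_phiF {r : ℝ} (h : ∀ t : ℝ, y - t • k ∈ A → r ≤ t) : (r : EReal) ≤ phiF A k y := by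
  refine le_sInf ?_
  rintro _ ⟨t, ht, rfl⟩
  exact EReal.coe_le_coe_iff.mpr (h t ht)

theorem phiF_lt_coe_iff {t : ℝ} : phiF A k y < t ↔ ∃ s < t, y - s • k ∈ A := by
  constructor
  · intro h
    obtain ⟨_, ⟨s, hs, rfl⟩, hst⟩ := sInf_lt_iff.mp h
    exact ⟨s, EReal.coe_lt_coe_iff.mp hst, hs⟩
  · rintro ⟨s, hst, hs⟩
    exact (phiF_le_coe hs).trans_lt (EReal.coe_lt_coe_iff.mpr hst)

theorem sub_smul_mem_of_le (hk : -k ∈ recCone A) {s t : ℝ} (hs : y - s • k ∈ A) (hst : s ≤ t) :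
    y - t • k ∈ A := by
  have h := hk _ hs (t - s) (sub_nonneg.mpr hst)
  rwa [show y - s • k + (t - s) • -k = y - t • k by module] at h

theorem exists_pos_forall_add_sub_smul_mem (hk : -k ∈ algInterior (recCone A)) (d : Y) :
    ∃ t : ℝ, 0 < t ∧ ∀ a ∈ A, a + d - t • k ∈ A := by
  obtain ⟨ε, hε, hd⟩ := hk.2 d
  refine ⟨1 / ε, by positivity, fun a ha => ?_⟩
  have h := hd ε hε.le le_rfl a ha (1 / ε) (by positivity)
  rwa [show a + (1 / ε) • (-k + ε • d) = a + d - (1 / ε) • k by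
    match_scalars <;> field_simp] at h

theorem phiF_ne_top (hA : A.Nonempty) (hk : -k ∈ algInterior (recCone A)) : phiF A k y ≠ ⊤ := by
  obtain ⟨a, ha⟩ := hA
  obtain ⟨t, -, ht⟩ := exists_pos_forall_add_sub_smul_mem hk (y - a)
  have h := ht a ha
  rw [add_sub_cancel] at h
  exact ne_top_of_le_ne_top (EReal.coe_ne_top t) (phiF_le_coe h)

theorem phiF_ne_bot (hA : A ≠ univ) (hk : -k ∈ algInterior (recCone A)) : phiF A k y ≠ ⊥ := by
  suffices ∃ r : ℝ, ∀ t : ℝ, y - t • k ∈ A → r ≤ t by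
    obtain ⟨r, hr⟩ := this
    exact ne_bot_of_le_ne_bot (EReal.coe_ne_bot r) (coe_le_phiF hr)
  by_contra! hunbdd
  have hline (t : ℝ) : y - t • k ∈ A := by
    obtain ⟨s, hs, hst⟩ := hunbdd t
    exact sub_smul_mem_of_le hk.1 hs hst.le
  refine hA (eq_univ_of_forall fun z => ?_)
  obtain ⟨t, -, ht⟩ := exists_pos_forall_add_sub_smul_mem hk (z - y)
  have h := ht _ (hline (-t))
  rwa [show y - (-t) • k + (z - y) - t • k = z by module] at h

theorem exists_phiF_eq_coe (hAne : A.Nonempty) (hA : A ≠ univ)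
    (hk : -k ∈ algInterior (recCone A)) : ∃ q : ℝ, phiF A k y = q :=
  ⟨_, (EReal.coe_toReal (phiF_ne_top hAne hk) (phiF_ne_bot hA hk)).symm⟩

theorem sub_smul_mem_algInterior (hk : -k ∈ algInterior (recCone A)) {s t : ℝ}
    (hs : y - s • k ∈ A) (hst : s < t) : y - t • k ∈ algInterior A := by
  have hδ : 0 < t - s := sub_pos.mpr hst
  refine ⟨sub_smul_mem_of_le hk.1 hs hst.le, fun d => ?_⟩
  obtain ⟨ε, hε, hd⟩ := hk.2 d
  refine ⟨(t - s) * ε, by positivity, fun σ hσ hσε => ?_⟩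
  have hτ : -k + (σ / (t - s)) • d ∈ recCone A :=
    hd _ (by positivity) (by rw [div_le_iff₀ hδ]; linarith)
  have h := hτ _ hs (t - s) hδ.le
  rwa [show y - s • k + (t - s) • (-k + (σ / (t - s)) • d) = y - t • k + σ • d by
    match_scalars <;> field_simp; ring] at h

theorem phiF_lt_coe_iff_mem_algInterior (hk : -k ∈ algInterior (recCone A)) {t : ℝ} :
    phiF A k y < t ↔ y - t • k ∈ algInterior A := by
  rw [phiF_lt_coe_iff]
  constructor
  · rintro ⟨s, hst, hs⟩
    exact sub_smul_mem_algInterior hk hs hst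
  · rintro ⟨-, hint⟩
    obtain ⟨ε, hε, hd⟩ := hint k
    have h := hd ε hε.le le_rfl
    rw [show y - t • k + ε • k = y - (t - ε) • k by module] at h
    exact ⟨t - ε, by linarith, h⟩

theorem phiF_sub_phiF_le_phiF_recCone {y₀ y₁ : Y} {q₀ q₁ : ℝ} (h₀ : phiF A k y₀ = q₀)
    (h₁ : phiF A k y₁ = q₁) : phiF A k y₀ - phiF A k y₁ ≤ phiF (recCone A) k (y₀ - y₁) := by
  rw [h₀, h₁, ← EReal.coe_sub]
  refine le_sInf ?_
  rintro _ ⟨s, hs, rfl⟩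
  have hshift : q₀ - s ≤ q₁ := by
    rw [← EReal.coe_le_coe_iff, ← h₁]
    refine coe_le_phiF fun r hr => ?_
    have h := hs _ hr 1 zero_le_one
    rw [show y₁ - r • k + (1 : ℝ) • (y₀ - y₁ - s • k) = y₀ - (r + s) • k by module] at h
    have := h₀ ▸ phiF_le_coe h
    linarith [EReal.coe_le_coe_iff.mp this]
  exact EReal.coe_le_coe_iff.mpr (by linarith)

end

theorem stmt_15_general {Y : Type*} [AddCommGroup Y] [Module ℝ Y]
    (A : Set Y) (hAne : A.Nonempty) (hAp : A ≠ Set.univ)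
    (k : Y)
    (hcore : -k ∈ algInterior (recCone A)) :
    (∀ y : Y, phiF A k y ≠ ⊤ ∧ phiF A k y ≠ ⊥) ∧
    (∀ t : ℝ, {y | phiF A k y < (t : EReal)} = {y | y - t • k ∈ algInterior A}) ∧
    (∀ y₀ y₁ : Y, phiF A k y₀ - phiF A k y₁ ≤ phiF (recCone A) k (y₀ - y₁)) := by
  refine ⟨fun y => ⟨phiF_ne_top hAne hcore, phiF_ne_bot hAp hcore⟩,
    fun t => ext fun y => phiF_lt_coe_iff_mem_algInterior hcore, fun y₀ y₁ => ?_⟩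
  obtain ⟨q₀, h₀⟩ := exists_phiF_eq_coe (y := y₀) hAne hAp hcore
  obtain ⟨q₁, h₁⟩ := exists_phiF_eq_coe (y := y₁) hAne hAp hcore
  exact phiF_sub_phiF_le_phiF_recCone h₀ h₁

theorem stmt_15 {Y : Type*} [AddCommGroup Y] [Module ℝ Y] [TopologicalSpace Y]
    [IsTopologicalAddGroup Y] [ContinuousSMul ℝ Y]
    (A : Set Y) (hAc : IsClosed A) (hAne : A.Nonempty) (hAp : A ≠ Set.univ)
    (k : Y) (hk : k ≠ 0) (hrec : ∀ a ∈ A, ∀ t : ℝ, 0 ≤ t → a - t • k ∈ A)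
    (hcore : -k ∈ algInterior (recCone A)) :
    (∀ y : Y, phiF A k y ≠ ⊤ ∧ phiF A k y ≠ ⊥) ∧
    (∀ t : ℝ, {y | phiF A k y < (t : EReal)} = {y | y - t • k ∈ algInterior A}) ∧
    (∀ y₀ y₁ : Y, phiF A k y₀ - phiF A k y₁ ≤ phiF (recCone A) k (y₀ - y₁)) :=
  stmt_15_general A hAne hAp k hcore
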